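/- (Risk bound for the minimal-norm interpolant.) Let l ∈ ℕ ∪ {∞} and let k ≥ 0 be an integer with (k/n)² + 2(k/n) < 1, λ_{k+1} > 0 and R_k > n; assume λ_i > 0 for all i ≤ l and, if l = ∞, that Σ_{i≥1} v_i²/λ_i < ∞. Set ε = √((k² + 2kn)/n²). Then the ridgeless omniscient risk estimate satisfies (1 − ε)² · R̃_0 ≤ (Σ_{i>k} λ_i)·(Σ_{i≤l} v_i²/λ_i)/n + (1 − n/R_k)^{−1} · (σ² + Σ_{i>l} v_i²). -/

import Mathlib

/-!
Write `L_i = λ_i / (λ_i + κ₀)` and `D = n - Σ L_i² = Σ L_i (1 - L_i)`, so that `E₀ = n / D`, and let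
`A = Σ_{i>k} L_i` and `T = Σ_{i>k} λ_i`. As every `L_i ≤ 1`, `A ≥ n - k ≥ (1 - ε) n`. Two lower
bounds on `D ≥ Σ_{i>k} L_i (1 - L_i)` control `E₀`: Cauchy–Schwarz gives `κ₀ A² ≤ T D`, and since
`L_i / λ_i` decreases as `λ_i` grows, the effective rank of `(L_i)_{i>k}` is at least `R_k`, whence
`D ≥ A (1 - n / R_k)`. On the target side `(1 - L_i)² ≤ min (1, κ₀ / λ_i)`.
-/

open Finset

theorem Summable.sq_of_nonneg {ι : Type*} {f : ι → ℝ} (hf : Summable f) (h0 : ∀ i, 0 ≤ f i) :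
    Summable fun i => f i ^ 2 :=
  .of_nonneg_of_le (fun i => sq_nonneg _)
    (fun i => by rw [sq]; exact mul_le_mul_of_nonneg_right (hf.le_tsum i fun j _ => h0 j) (h0 i))
    (hf.mul_left (∑' i, f i))

theorem tsum_sq_le_tsum_mul_tsum_of_sq_le_mul {r f g : ℕ → ℝ} (hr : Summable r)
    (hf : Summable f) (hg : Summable g) (hf0 : ∀ i, 0 ≤ f i) (hg0 : ∀ i, 0 ≤ g i)
    (h : ∀ i, r i ^ 2 ≤ f i * g i) : (∑' i, r i) ^ 2 ≤ (∑' i, f i) * ∑' i, g i :=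
  le_of_tendsto_of_tendsto' (hr.hasSum.tendsto_sum_nat.pow 2)
    (hf.hasSum.tendsto_sum_nat.mul hg.hasSum.tendsto_sum_nat) fun _ =>
    sum_sq_le_sum_mul_sum_of_sq_le_mul _ (fun i _ => hf0 i) (fun i _ => hg0 i) fun i _ => h i

theorem tsum_mul_nonneg_of_tsum_eq_zero {ι : Type*} {d f : ι → ℝ} (hd : Summable d)
    (hdf : Summable fun i => d i * f i) (h0 : ∑' i, d i = 0) (c : ℝ)
    (hc : ∀ i, 0 ≤ d i * (f i - c)) : 0 ≤ ∑' i, d i * f i := by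
  have : ∑' i, d i * (f i - c) = ∑' i, d i * f i := by
    simp_rw [mul_sub, hdf.tsum_sub (hd.mul_right c), tsum_mul_right, h0, zero_mul, sub_zero]
  exact this ▸ tsum_nonneg hc

theorem tsum_sub_le_tsum_nat_add {f : ℕ → ℝ} (hf : Summable f) (h1 : ∀ i, f i ≤ 1) (k : ℕ) :
    ∑' i, f i - k ≤ ∑' i, f (k + i) := by
  have hhead : ∑ i ∈ range k, f i ≤ k := by
    simpa using sum_le_card_nsmul (range k) f 1 fun i _ => h1 i
  have htail : ∑' i, f (i + k) = ∑' i, f (k + i) := by simp_rw [add_comm]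
  linarith [hf.sum_add_tsum_nat_add k]

theorem summable_subtype_natCast_lt {f : ℕ → ℝ} {l : ℕ∞} (h : l = ⊤ → Summable f) :
    Summable fun i : {i : ℕ // (i : ℕ∞) < l} => f i := by
  induction l using WithTop.recTopCoe with
  | top => exact (h rfl).subtype _
  | coe m =>
    have : Finite {i : ℕ // (i : ℕ∞) < m} :=
      ((Set.finite_Iio m).subset fun i (hi : (i : ℕ∞) < m) => by simpa using hi).to_subtype
    exact .of_finite

section Learnability

variable {κ x : ℝ}

theorem div_add_le_one (hκ : 0 ≤ κ) (hx : 0 ≤ x) : x / (x + κ) ≤ 1 := by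
  rcases (add_nonneg hx hκ).eq_or_lt with h | h
  · simp [← h]
  · exact div_le_one_of_le₀ (by linarith) h.le

theorem one_sub_div_add (hκ : 0 < κ) (hx : 0 ≤ x) : 1 - x / (x + κ) = κ / (x + κ) := by
  rw [one_sub_div (by positivity), add_sub_cancel_left]

theorem div_add_sub_sq (hκ : 0 < κ) (hx : 0 ≤ x) :
    x / (x + κ) - (x / (x + κ)) ^ 2 = κ * x / (x + κ) ^ 2 := by
  have : x + κ ≠ 0 := by positivity
  field_simp
  ring

theorem sq_one_sub_div_add_le (hκ : 0 < κ) (hx : 0 < x) : (1 - x / (x + κ)) ^ 2 ≤ κ / x := by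
  rw [one_sub_div_add hκ hx.le, div_pow, div_le_div_iff₀ (by positivity) hx]
  nlinarith [mul_pos hκ hx, mul_pos (mul_pos hκ hx) hx]

variable {ι : Type*} {w : ι → ℝ}

theorem summable_div_add (hκ : 0 < κ) (hw : ∀ i, 0 ≤ w i) (hs : Summable w) :
    Summable fun i => w i / (w i + κ) :=
  .of_nonneg_of_le (fun i => div_nonneg (hw i) (by linarith [hw i]))
    (fun i => div_le_div_of_nonneg_left (hw i) hκ (by linarith [hw i])) (hs.div_const κ)

theorem sq_tsum_mul_tsum_sq_div_add_le (hκ : 0 < κ) (hw : ∀ i, 0 ≤ w i) (hs : Summable w)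
    (hA : 0 < ∑' i, w i / (w i + κ)) :
    (∑' i, w i) ^ 2 * ∑' i, (w i / (w i + κ)) ^ 2
      ≤ (∑' i, w i / (w i + κ)) ^ 2 * ∑' i, w i ^ 2 := by
  set a := fun i => w i / (w i + κ) with ha_def
  set A := ∑' i, a i
  set T := ∑' i, w i
  have ha : Summable a := summable_div_add hκ hw hs
  have ha0 : ∀ i, 0 ≤ a i := fun i => div_nonneg (hw i) (by linarith [hw i])
  have hT : 0 < T := by
    have : A ≤ T / κ := by
      rw [← tsum_div_const]
      exact ha.tsum_le_tsum (fun i => div_le_div_of_nonneg_left (hw i) hκ (by linarith [hw i]))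
        (hs.div_const κ)
    nlinarith [(le_div_iff₀ hκ).1 this]
  obtain ⟨m, hm, hTm⟩ : ∃ m, 0 < m ∧ T = A * m := ⟨T / A, by positivity, by field_simp⟩
  have hd : Summable fun i => w i * A - a i * T := (hs.mul_right A).sub (ha.mul_right T)
  have hdf : Summable fun i => (w i * A - a i * T) * (w i * A + a i * T) :=
    (((hs.sq_of_nonneg hw).mul_right (A ^ 2)).sub ((ha.sq_of_nonneg ha0).mul_right (T ^ 2))).congr
      fun i => by ring
  have hd0 : ∑' i, (w i * A - a i * T) = 0 := by
    rw [(hs.mul_right A).tsum_sub (ha.mul_right T), tsum_mul_right, tsum_mul_right, mul_comm,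
      sub_self]
  -- `w i * A - a i * T = a i * A * (w i + κ - m)`, and `c` is the value of `w i * A + a i * T`
  -- at `w i + κ = m`, so the two factors change sign together.
  have key := tsum_mul_nonneg_of_tsum_eq_zero hd hdf hd0 ((m - κ) * A + T * ((m - κ) / m))
    fun i => by
      have hwi := hw i
      have : (w i * A - a i * T) * (w i * A + a i * T - ((m - κ) * A + T * ((m - κ) / m)))
          = a i * A * (w i + κ - m) ^ 2 * (A + κ * T / ((w i + κ) * m)) := by
        rw [ha_def, hTm]
        field_simp
        ring
      rw [this]
      have := ha0 i
      positivity
  have hsum : ∑' i, (w i * A - a i * T) * (w i * A + a i * T)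
      = A ^ 2 * ∑' i, w i ^ 2 - T ^ 2 * ∑' i, a i ^ 2 := by
    rw [← tsum_mul_left, ← tsum_mul_left, ← ((hs.sq_of_nonneg hw).mul_left _).tsum_sub
      ((ha.sq_of_nonneg ha0).mul_left _)]
    exact tsum_congr fun i => by ring
  linarith

noncomputable def effectiveRank (w : ι → ℝ) : ℝ := (∑' i, w i) ^ 2 / ∑' i, w i ^ 2

theorem tsum_sq_div_add_mul_effectiveRank_le (hκ : 0 < κ) (hw : ∀ i, 0 ≤ w i)
    (hs : Summable w) (hA : 0 < ∑' i, w i / (w i + κ)) :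
    (∑' i, (w i / (w i + κ)) ^ 2) * effectiveRank w ≤ (∑' i, w i / (w i + κ)) ^ 2 := by
  rcases (tsum_nonneg fun i => sq_nonneg (w i) : 0 ≤ ∑' i, w i ^ 2).eq_or_lt with hS | hS
  · rw [effectiveRank, ← hS, div_zero, mul_zero]
    positivity
  · rw [effectiveRank, mul_div_assoc', div_le_iff₀ hS]
    linarith [sq_tsum_mul_tsum_sq_div_add_le hκ hw hs hA]

theorem tsum_sq_one_sub_div_add_mul_sq_le (hκ : 0 < κ) {v : ι → ℝ} (hw : ∀ i, 0 ≤ w i)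
    (hv : Summable fun i => v i ^ 2) (s : Set ι) (hws : ∀ i ∈ s, 0 < w i)
    (hs : Summable fun i : s => v i ^ 2 / w i) :
    ∑' i, (1 - w i / (w i + κ)) ^ 2 * v i ^ 2
      ≤ κ * ∑' i : s, v i ^ 2 / w i + ∑' i : ↥sᶜ, v i ^ 2 := by
  have hle : ∀ i, (1 - w i / (w i + κ)) ^ 2 * v i ^ 2 ≤ v i ^ 2 := fun i => by
    have := hw i
    rw [one_sub_div_add hκ this]
    exact mul_le_of_le_one_left (sq_nonneg _) (pow_le_one₀ (by positivity)
      (div_le_one_of_le₀ (by linarith) (by positivity)))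
  have hf : Summable fun i => (1 - w i / (w i + κ)) ^ 2 * v i ^ 2 :=
    .of_nonneg_of_le (fun i => by positivity) hle hv
  rw [← hf.tsum_subtype_add_tsum_subtype_compl s, ← tsum_mul_left]
  refine add_le_add ((hf.subtype s).tsum_le_tsum (fun i => ?_) (hs.mul_left κ))
    ((hf.subtype _).tsum_le_tsum (fun i => hle i) (hv.subtype _))
  rw [mul_div_left_comm, mul_comm (v i ^ 2)]
  exact mul_le_mul_of_nonneg_right (sq_one_sub_div_add_le hκ (hws i i.2)) (sq_nonneg _)

end Learnability

theorem sq_tsum_div_add_le {κ : ℝ} (hκ : 0 < κ) {w : ℕ → ℝ} (hw : ∀ i, 0 ≤ w i)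
    (hs : Summable w) :
    κ * (∑' i, w i / (w i + κ)) ^ 2
      ≤ (∑' i, w i) * (∑' i, w i / (w i + κ) - ∑' i, (w i / (w i + κ)) ^ 2) := by
  have hL := summable_div_add hκ hw hs
  have hL2 := hL.sq_of_nonneg fun i => div_nonneg (hw i) (by linarith [hw i])
  have h := tsum_sq_le_tsum_mul_tsum_of_sq_le_mul hL hs ((hL.sub hL2).mul_left κ⁻¹) hw
    (fun i => ?_) (fun i => ?_)
  · rw [tsum_mul_left, hL.tsum_sub hL2] at h
    have := mul_le_mul_of_nonneg_left h hκ.le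
    rwa [mul_left_comm _ κ⁻¹, mul_inv_cancel_left₀ hκ.ne'] at this
  · have := hw i
    rw [div_add_sub_sq hκ this]
    positivity
  · have := hw i
    rw [div_add_sub_sq hκ this]
    refine le_of_eq ?_
    field_simp

theorem tsum_div_add_nat_add_bounds {κ : ℝ} (hκ : 0 < κ) {w : ℕ → ℝ} (hw : ∀ i, 0 ≤ w i)
    (hs : Summable w) {n : ℝ} (hn : ∑' i, w i / (w i + κ) = n) (k : ℕ) :
    n - k ≤ ∑' i, w (k + i) / (w (k + i) + κ) ∧ ∑' i, w (k + i) / (w (k + i) + κ) ≤ n ∧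
      ∑' i, w (k + i) / (w (k + i) + κ) - ∑' i, (w (k + i) / (w (k + i) + κ)) ^ 2
        ≤ n - ∑' i, (w i / (w i + κ)) ^ 2 := by
  have hL := summable_div_add hκ hw hs
  have hL0 : ∀ i, 0 ≤ w i / (w i + κ) := fun i => div_nonneg (hw i) (by linarith [hw i])
  have hL1 : ∀ i, w i / (w i + κ) ≤ 1 := fun i => div_add_le_one hκ.le (hw i)
  have hL2 := hL.sq_of_nonneg hL0
  have hLtail : Summable fun i => w (k + i) / (w (k + i) + κ) :=
    hL.comp_injective (add_right_injective k)
  have hL2tail : Summable fun i => (w (k + i) / (w (k + i) + κ)) ^ 2 :=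
    hL2.comp_injective (add_right_injective k)
  refine ⟨hn ▸ tsum_sub_le_tsum_nat_add hL hL1 k,
    hn ▸ tsum_comp_le_tsum_of_inj hL hL0 (add_right_injective k), ?_⟩
  rw [← hLtail.tsum_sub hL2tail, ← hn, ← hL.tsum_sub hL2]
  exact tsum_comp_le_tsum_of_inj (hL.sub hL2)
    (fun i => sub_nonneg.2 (pow_le_of_le_one (hL0 i) (hL1 i) two_ne_zero)) (add_right_injective k)

theorem tsum_sq_one_sub_div_add_mul_sq_le_enat {κ : ℝ} (hκ : 0 < κ) {w v : ℕ → ℝ}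
    (hw : ∀ i, 0 ≤ w i) (hv : Summable fun i => v i ^ 2) {l : ℕ∞}
    (hwl : ∀ i : ℕ, (i : ℕ∞) < l → 0 < w i) (hl : l = ⊤ → Summable fun i => v i ^ 2 / w i) :
    ∑' i, (1 - w i / (w i + κ)) ^ 2 * v i ^ 2
      ≤ κ * ∑' i : {i : ℕ // (i : ℕ∞) < l}, v i.1 ^ 2 / w i.1
        + ∑' i : {i : ℕ // l ≤ (i : ℕ∞)}, v i.1 ^ 2 := by
  have hcompl : ∑' i : ↥{i : ℕ | (i : ℕ∞) < l}ᶜ, v i ^ 2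
      = ∑' i : {i : ℕ // l ≤ (i : ℕ∞)}, v i.1 ^ 2 :=
    (Equiv.subtypeEquivRight (q := fun i : ℕ => l ≤ (i : ℕ∞)) fun i => not_lt).tsum_eq
      fun i => v i.1 ^ 2
  have h := tsum_sq_one_sub_div_add_mul_sq_le hκ hw hv {i | (i : ℕ∞) < l} hwl
    (summable_subtype_natCast_lt hl)
  rwa [hcompl] at h

theorem one_sub_bounds_of_eq_sqrt {k n ε : ℝ} (hk : 0 ≤ k) (hn : 0 < n)
    (h : (k / n) ^ 2 + 2 * (k / n) < 1) (hε : ε = √((k ^ 2 + 2 * k * n) / n ^ 2)) :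
    0 < 1 - ε ∧ 1 - ε ≤ 1 ∧ (1 - ε) * n ≤ n - k := by
  have hx : (k ^ 2 + 2 * k * n) / n ^ 2 = (k / n) ^ 2 + 2 * (k / n) := by field_simp
  have hkn : 0 ≤ k / n := by positivity
  rw [hx] at hε
  have hε1 : ε < 1 := hε ▸ (Real.sqrt_lt' one_pos).2 (by linarith)
  have hεk : k / n ≤ ε := hε ▸ Real.le_sqrt_of_sq_le (by linarith)
  rw [div_le_iff₀ hn] at hεk
  exact ⟨by linarith, by linarith [hε ▸ Real.sqrt_nonneg _], by linarith⟩

theorem overfitting_coefficient_bounds {κ : ℝ} (hκ : 0 < κ) {w : ℕ → ℝ} (hw : ∀ i, 0 ≤ w i)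
    (hs : Summable w) {n : ℝ} (hn : 0 < n) (hL : ∑' i, w i / (w i + κ) = n) (k : ℕ) {u : ℝ}
    (hu0 : 0 < u) (hu1 : u ≤ 1) (hu : u * n ≤ n - k)
    (hR : n < effectiveRank fun i => w (k + i)) :
    0 < n - ∑' i, (w i / (w i + κ)) ^ 2 ∧
      u ^ 2 * (n / (n - ∑' i, (w i / (w i + κ)) ^ 2)) * κ ≤ (∑' i, w (k + i)) / n ∧
      u ^ 2 * (n / (n - ∑' i, (w i / (w i + κ)) ^ 2))
        ≤ (1 - n / effectiveRank fun i => w (k + i))⁻¹ := by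
  have htail : Summable fun i => w (k + i) := hs.comp_injective (add_right_injective k)
  have htail0 : ∀ i, 0 ≤ w (k + i) := fun i => hw (k + i)
  obtain ⟨hAk, hAn, hAD⟩ := tsum_div_add_nat_add_bounds hκ hw hs hL k
  have hA : u * n ≤ ∑' i, w (k + i) / (w (k + i) + κ) := by linarith
  have hA0 := (mul_pos hu0 hn).trans_le hA
  have hCS := sq_tsum_div_add_le hκ htail0 htail
  have hP := tsum_sq_div_add_mul_effectiveRank_le hκ htail0 htail hA0
  set R := effectiveRank fun i => w (k + i)
  set A := ∑' i, w (k + i) / (w (k + i) + κ)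
  set P := ∑' i, (w (k + i) / (w (k + i) + κ)) ^ 2
  set D := n - ∑' i, (w i / (w i + κ)) ^ 2
  have hR0 : 0 < R := hn.trans hR
  have hρ : 0 < 1 - n / R := sub_pos.2 ((div_lt_one hR0).2 hR)
  have hAρ : A * (1 - n / R) ≤ D := by
    have : P ≤ A * n / R := by
      rw [le_div_iff₀ hR0]
      nlinarith [mul_le_mul_of_nonneg_left hAn hA0.le]
    rw [mul_one_sub, mul_div_assoc']
    linarith
  have hTD : κ * A ^ 2 ≤ (∑' i, w (k + i)) * D :=
    hCS.trans (mul_le_mul_of_nonneg_left hAD (tsum_nonneg htail0))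
  have hD : 0 < D := (mul_pos hA0 hρ).trans_le hAρ
  refine ⟨hD, ?_, ?_⟩
  · rw [mul_div_assoc', div_mul_eq_mul_div, div_le_div_iff₀ hD hn]
    nlinarith [mul_le_mul_of_nonneg_left (pow_le_pow_left₀ (by positivity) hA 2) hκ.le]
  · rw [mul_div_assoc', ← one_div, div_le_div_iff₀ hD hρ]
    nlinarith [mul_nonneg (mul_pos hu0 hn).le (sub_nonneg.2 hu1)]

-- `lam i` and `v i` stand for `λ_{i+1}` and `v_{i+1}`, so the paper's `i ≤ l` reads `(i : ℕ∞) < l`.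
theorem risk_bound_min_norm_interpolant_general
    (n : ℕ) (hn : 1 ≤ n)
    (lam : ℕ → ℝ) (hlam_nonneg : ∀ i, 0 ≤ lam i)
    (hlam_summable : Summable lam)
    (v : ℕ → ℝ) (hv : Summable fun i => v i ^ 2)
    (σ2 : ℝ) (hσ2 : 0 ≤ σ2)
    (κ0 : ℝ) (hκ0 : 0 < κ0)
    (hκ0_eq : ∑' i, lam i / (lam i + κ0) = (n : ℝ))
    (E0 : ℝ)
    (hE0 : E0 = (n : ℝ) / ((n : ℝ) - ∑' i, (lam i / (lam i + κ0)) ^ 2))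
    (Rt0 : ℝ)
    (hRt0 : Rt0 = E0 * (∑' i, (1 - lam i / (lam i + κ0)) ^ 2 * v i ^ 2 + σ2))
    (l : ℕ∞)
    (hlam_pos_l : ∀ i : ℕ, (i : ℕ∞) < l → 0 < lam i)
    (hl_top : l = ⊤ → Summable fun i => v i ^ 2 / lam i)
    (k : ℕ)
    (hkn : ((k : ℝ) / n) ^ 2 + 2 * ((k : ℝ) / n) < 1)
    (Rk : ℝ) (hRk : Rk = (∑' i, lam (k + i)) ^ 2 / ∑' i, lam (k + i) ^ 2)
    (hRkn : (n : ℝ) < Rk)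
    (ε : ℝ) (hε : ε = Real.sqrt (((k : ℝ) ^ 2 + 2 * k * n) / (n : ℝ) ^ 2)) :
    (1 - ε) ^ 2 * Rt0
      ≤ (∑' i, lam (k + i)) * (∑' i : {i : ℕ // (i : ℕ∞) < l}, v i.1 ^ 2 / lam i.1) / n
        + (1 - (n : ℝ) / Rk)⁻¹ * (σ2 + ∑' i : {i : ℕ // l ≤ (i : ℕ∞)}, v i.1 ^ 2) := by
  subst hE0 hRt0
  have hn' : (0 : ℝ) < n := by exact_mod_cast hn
  obtain ⟨hu0, hu1, hu⟩ := one_sub_bounds_of_eq_sqrt (Nat.cast_nonneg k) hn' hkn hε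
  replace hRk : Rk = effectiveRank fun i => lam (k + i) := hRk
  subst hRk
  obtain ⟨hD, hBκ, hBρ⟩ := overfitting_coefficient_bounds hκ0 hlam_nonneg hlam_summable hn'
    hκ0_eq k hu0 hu1 hu hRkn
  have hres := tsum_sq_one_sub_div_add_mul_sq_le_enat hκ0 hlam_nonneg hv hlam_pos_l hl_top
  set V := ∑' i : {i : ℕ // (i : ℕ∞) < l}, v i.1 ^ 2 / lam i.1
  set W := ∑' i : {i : ℕ // l ≤ (i : ℕ∞)}, v i.1 ^ 2
  have hV : 0 ≤ V := tsum_nonneg fun i => div_nonneg (sq_nonneg _) (hlam_nonneg _)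
  have hσW : 0 ≤ σ2 + W := add_nonneg hσ2 (tsum_nonneg fun i => sq_nonneg _)
  set D := (n : ℝ) - ∑' i, (lam i / (lam i + κ0)) ^ 2
  calc (1 - ε) ^ 2 * (n / D * (∑' i, (1 - lam i / (lam i + κ0)) ^ 2 * v i ^ 2 + σ2))
      ≤ (1 - ε) ^ 2 * (n / D) * (κ0 * V + (σ2 + W)) := by
        rw [← mul_assoc]
        exact mul_le_mul_of_nonneg_left (by linarith) (by positivity)
    _ = (1 - ε) ^ 2 * (n / D) * κ0 * V + (1 - ε) ^ 2 * (n / D) * (σ2 + W) := by ring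
    _ ≤ (∑' i, lam (k + i)) / n * V + (1 - n / effectiveRank fun i => lam (k + i))⁻¹ * (σ2 + W) :=
        add_le_add (mul_le_mul_of_nonneg_right hBκ hV) (mul_le_mul_of_nonneg_right hBρ hσW)
    _ = _ := by ring

/-- Risk bound for the minimal-norm interpolant: For
`l ∈ ℕ ∪ {∞}` and `k ≥ 0` with `(k/n)² + 2(k/n) < 1`, `λ_{k+1} > 0` and
`R_k > n`, assuming `λ_i > 0` for `i ≤ l` (and summability of `v_i²/λ_i` if
`l = ∞`), with `ε = √((k² + 2kn)/n²)` the ridgeless omniscient risk estimate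
satisfies
`(1 − ε)²·R̃_0 ≤ (Σ_{i>k} λ_i)·(Σ_{i≤l} v_i²/λ_i)/n + (1 − n/R_k)⁻¹·(σ² + Σ_{i>l} v_i²)`.
(Here `lam i`, `v i` denote `λ_{i+1}`, `v_{i+1}`; the 1-based condition
`i ≤ l` becomes `(i : ℕ∞) < l` for the 0-based index.) -/
theorem risk_bound_min_norm_interpolant
    (n : ℕ) (hn : 1 ≤ n)
    (lam : ℕ → ℝ) (hlam_nonneg : ∀ i, 0 ≤ lam i) (hlam_mono : Antitone lam)
    (hlam_summable : Summable lam) (hlam_ne : ∃ i, lam i ≠ 0)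
    (v : ℕ → ℝ) (hv : Summable fun i => v i ^ 2)
    (σ2 : ℝ) (hσ2 : 0 ≤ σ2)
    (κ0 : ℝ) (hκ0 : 0 < κ0)
    (hκ0_eq : ∑' i, lam i / (lam i + κ0) = (n : ℝ))
    (E0 : ℝ)
    (hE0 : E0 = (n : ℝ) / ((n : ℝ) - ∑' i, (lam i / (lam i + κ0)) ^ 2))
    (Rt0 : ℝ)
    (hRt0 : Rt0 = E0 * (∑' i, (1 - lam i / (lam i + κ0)) ^ 2 * v i ^ 2 + σ2))
    (l : ℕ∞)
    (hlam_pos_l : ∀ i : ℕ, (i : ℕ∞) < l → 0 < lam i)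
    (hl_top : l = ⊤ → Summable fun i => v i ^ 2 / lam i)
    (k : ℕ) (hlamk : 0 < lam k)
    (hkn : ((k : ℝ) / n) ^ 2 + 2 * ((k : ℝ) / n) < 1)
    (Rk : ℝ) (hRk : Rk = (∑' i, lam (k + i)) ^ 2 / ∑' i, lam (k + i) ^ 2)
    (hRkn : (n : ℝ) < Rk)
    (ε : ℝ) (hε : ε = Real.sqrt (((k : ℝ) ^ 2 + 2 * k * n) / (n : ℝ) ^ 2)) :
    (1 - ε) ^ 2 * Rt0
      ≤ (∑' i, lam (k + i)) * (∑' i : {i : ℕ // (i : ℕ∞) < l}, v i.1 ^ 2 / lam i.1) / n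
        + (1 - (n : ℝ) / Rk)⁻¹ * (σ2 + ∑' i : {i : ℕ // l ≤ (i : ℕ∞)}, v i.1 ^ 2) :=
  risk_bound_min_norm_interpolant_general n hn lam hlam_nonneg hlam_summable v hv σ2 hσ2 κ0 hκ0
    hκ0_eq E0 hE0 Rt0 hRt0 l hlam_pos_l hl_top k hkn Rk hRk hRkn ε hε
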